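/- Let $0 \leq b_1, \ldots, b_r \leq q-2$. The toric code obtained by evaluating all polynomials $f \in \mathbb{F}_q[t_1,\ldots,t_r]$ with $\deg_{t_i} f \leq b_i$ for each $i$ at all points of $(\mathbb{F}_q^\ast)^r$ has parameters $[(q-1)^r, \prod_{i=1}^r (b_i+1), \prod_{i=1}^r (q-1-b_i)]$, i.e., length $(q-1)^r$, dimension $\prod (b_i+1)$, and minimum distance exactly $\prod (q-1-b_i)$. -/

import Mathlib

/-!
A nonzero polynomial of degree at most `b₀` in `t₀` has at most `b₀` roots on a line, so
specialising the remaining variables at a point where the leading coefficient in `t₀` does not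
vanish and inducting on the number of variables, a nonzero `f` with `deg_{tᵢ} f ≤ bᵢ` is nonzero
on at least `∏ (q - 1 - bᵢ)` points of the torus. The product `∏ᵢ ∏_{a ∈ Sᵢ} (tᵢ - a)` with
`|Sᵢ| = bᵢ` is nonzero exactly on `∏ᵢ Sᵢᶜ`, so the bound is attained. Since every `bᵢ < q - 1`, the
bound also shows that evaluation is injective on the span of the monomials `t^m` with `m ≤ b`,
which gives the dimension `∏ (bᵢ + 1)`.
-/

open Finset MvPolynomial Function

noncomputable def evalAtGrid {R α σ : Type*} [CommSemiring R] (e : α → R) :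
    MvPolynomial σ R →ₗ[R] (σ → α) → R :=
  LinearMap.pi fun t => (aeval fun i => e (t i)).toLinearMap

@[simp]
theorem evalAtGrid_apply {R α σ : Type*} [CommSemiring R] (e : α → R) (f : MvPolynomial σ R)
    (t : σ → α) : evalAtGrid e f t = eval (fun i => e (t i)) f :=
  rfl

theorem hammingNorm_fin_succ {α β : Type*} [Fintype α] [Zero β] [DecidableEq β] {n : ℕ}
    (g : (Fin (n + 1) → α) → β) :
    hammingNorm g = ∑ s : Fin n → α, hammingNorm fun a => g (Fin.cons a s) := by
  simp only [hammingNorm, card_filter]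
  rw [← (Fin.consEquiv fun _ => α).sum_comp, Fintype.sum_prod_type_right]
  rfl

theorem degreeOf_prod_prod_X_sub_C_le {R α σ : Type*} [CommRing R] [Nontrivial R] [Fintype σ]
    [DecidableEq σ] (e : α → R) (S : σ → Finset α) (j : σ) :
    degreeOf j (∏ i, ∏ a ∈ S i, (X i - C (e a))) ≤ #(S j) :=
  calc degreeOf j (∏ i, ∏ a ∈ S i, (X i - C (e a)))
      ≤ ∑ i, ∑ a ∈ S i, degreeOf j (X i - C (e a) : MvPolynomial σ R) :=
        (degreeOf_prod_le _ _ _).trans (sum_le_sum fun i _ => degreeOf_prod_le _ _ _)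
    _ ≤ ∑ i, ∑ _a ∈ S i, if j = i then 1 else 0 := by
        gcongr with i _ a _
        calc degreeOf j (X i - C (e a) : MvPolynomial σ R)
            ≤ max (degreeOf j (X i : MvPolynomial σ R)) (degreeOf j (C (e a))) :=
              degreeOf_sub_le _ _ _
          _ = if j = i then 1 else 0 := by rw [degreeOf_X, degreeOf_C, max_eq_left (Nat.zero_le _)]
    _ = #(S j) := by simp

section Dimension

variable {R σ : Type*} [CommRing R]

theorem mem_restrictSupport_Iic_iff {b : σ →₀ ℕ} {f : MvPolynomial σ R} :
    f ∈ restrictSupport R (Set.Iic b) ↔ ∀ i, degreeOf i f ≤ b i := by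
  simp only [mem_restrictSupport_iff, Set.subset_def, degreeOf_le_iff, mem_coe, Set.mem_Iic,
    Finsupp.le_def]
  exact ⟨fun h i m hm => h m hm i, fun h m hm i => h i m hm⟩

theorem finrank_restrictSupport_Iic [StrongRankCondition R] (b : σ →₀ ℕ) :
    Module.finrank R (restrictSupport R (Set.Iic b)) = b.prod fun _ k => k + 1 := by
  classical
  rw [Module.finrank_eq_card_basis (basisRestrictSupport R _), ← Set.toFinset_card,
    Set.toFinset_Iic, Finsupp.card_Iic]
  simp [Finsupp.prod]

end Dimension

section Counting

variable {R α : Type*} [CommRing R] [IsDomain R] [DecidableEq R] [Fintype α] {e : α → R}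

theorem Polynomial.card_sub_natDegree_le_hammingNorm_eval (he : Injective e)
    {p : Polynomial R} (hp : p ≠ 0) :
    Fintype.card α - p.natDegree ≤ hammingNorm fun a => p.eval (e a) := by
  have hroots : #{a | p.eval (e a) = 0} ≤ p.natDegree :=
    calc #{a | p.eval (e a) = 0}
        ≤ #p.roots.toFinset :=
          card_le_card_of_injOn e (fun a ha => by simp_all) he.injOn
      _ ≤ p.natDegree := (Multiset.toFinset_card_le _).trans (Polynomial.card_roots' p)
  have hsplit := card_filter_add_card_filter_not (s := univ) fun a => p.eval (e a) = 0
  rw [card_univ] at hsplit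
  simp only [hammingNorm, ne_eq]
  omega

theorem card_sub_degreeOf_zero_le_hammingNorm_evalAtGrid_cons (he : Injective e) {n : ℕ}
    {f : MvPolynomial (Fin (n + 1)) R} {s : Fin n → α}
    (hs : evalAtGrid e (finSuccEquiv R n f).leadingCoeff s ≠ 0) :
    Fintype.card α - degreeOf 0 f ≤ hammingNorm fun a => evalAtGrid e f (Fin.cons a s) := by
  set p := (finSuccEquiv R n f).map (eval fun i => e (s i))
  have hp : p ≠ 0 := fun h => hs <| by
    rw [evalAtGrid_apply, Polynomial.leadingCoeff, ← Polynomial.coeff_map]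
    change p.coeff _ = 0
    rw [h, Polynomial.coeff_zero]
  have hdeg : p.natDegree ≤ degreeOf 0 f :=
    Polynomial.natDegree_map_le.trans (natDegree_finSuccEquiv f).le
  have heval : ∀ a, p.eval (e a) = evalAtGrid e f (Fin.cons a s) := fun a => by
    rw [evalAtGrid_apply, ← comp_def e, Fin.comp_cons, eval_eq_eval_mv_eval']
    rfl
  calc Fintype.card α - degreeOf 0 f
      ≤ Fintype.card α - p.natDegree := Nat.sub_le_sub_left hdeg _
    _ ≤ hammingNorm fun a => p.eval (e a) := p.card_sub_natDegree_le_hammingNorm_eval he hp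
    _ = hammingNorm fun a => evalAtGrid e f (Fin.cons a s) := by simp only [heval]

theorem prod_card_sub_degreeOf_le_hammingNorm_evalAtGrid (he : Injective e) {n : ℕ}
    {f : MvPolynomial (Fin n) R} (hf : f ≠ 0) :
    ∏ i, (Fintype.card α - degreeOf i f) ≤ hammingNorm (evalAtGrid e f) := by
  induction n with
  | zero =>
    obtain ⟨a, rfl⟩ := C_surjective (Fin 0) f
    rw [Fin.prod_univ_zero, Nat.one_le_iff_ne_zero, ← pos_iff_ne_zero, hammingNorm_pos_iff]
    intro h
    exact hf (by simpa using congrFun h isEmptyElim)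
  | succ n ih =>
    set g := (finSuccEquiv R n f).leadingCoeff
    have hg : g ≠ 0 := by simpa [g] using hf
    calc ∏ i, (Fintype.card α - degreeOf i f)
        = (Fintype.card α - degreeOf 0 f) * ∏ i : Fin n, (Fintype.card α - degreeOf i.succ f) :=
          Fin.prod_univ_succ _
      _ ≤ (Fintype.card α - degreeOf 0 f) * hammingNorm (evalAtGrid e g) := by
          gcongr
          refine le_trans (prod_le_prod' fun i _ => ?_) (ih hg)
          exact Nat.sub_le_sub_left (degreeOf_coeff_finSuccEquiv f i _) _
      _ = ∑ s ∈ {s | evalAtGrid e g s ≠ 0}, (Fintype.card α - degreeOf 0 f) := by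
          rw [sum_const, smul_eq_mul, mul_comm]
          rfl
      _ ≤ ∑ s ∈ {s | evalAtGrid e g s ≠ 0}, hammingNorm fun a => evalAtGrid e f (Fin.cons a s) :=
          sum_le_sum fun s hs =>
            card_sub_degreeOf_zero_le_hammingNorm_evalAtGrid_cons he (mem_filter.1 hs).2
      _ ≤ ∑ s, hammingNorm fun a => evalAtGrid e f (Fin.cons a s) :=
          sum_le_sum_of_subset (subset_univ _)
      _ = hammingNorm (evalAtGrid e f) := (hammingNorm_fin_succ _).symm

theorem hammingNorm_evalAtGrid_prod_prod_X_sub_C (he : Injective e) {σ : Type*} [Fintype σ]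
    [DecidableEq σ] (S : σ → Finset α) :
    hammingNorm (evalAtGrid e (∏ i, ∏ a ∈ S i, (X i - C (e a)))) =
      ∏ i, (Fintype.card α - #(S i)) := by
  classical
  have hsupport : ({t | evalAtGrid e (∏ i, ∏ a ∈ S i, (X i - C (e a))) t ≠ 0} : Finset _) =
      Fintype.piFinset fun i => (S i)ᶜ := by
    ext t
    simp [prod_ne_zero_iff, sub_eq_zero, he.eq_iff]
  rw [hammingNorm, hsupport, Fintype.card_piFinset]
  simp [card_compl]

theorem exists_degreeOf_le_hammingNorm_evalAtGrid_eq (he : Injective e) {σ : Type*}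
    [Fintype σ] [DecidableEq σ] {b : σ → ℕ} (hb : ∀ i, b i ≤ Fintype.card α) :
    ∃ f : MvPolynomial σ R, (∀ i, degreeOf i f ≤ b i) ∧
      hammingNorm (evalAtGrid e f) = ∏ i, (Fintype.card α - b i) := by
  choose S _ hS using fun i => exists_subset_card_eq (s := (univ : Finset α)) (hb i)
  refine ⟨∏ i, ∏ a ∈ S i, (X i - C (e a)), fun i => ?_, ?_⟩
  · exact (hS i).le.trans' (degreeOf_prod_prod_X_sub_C_le e S i)
  · simp only [hammingNorm_evalAtGrid_prod_prod_X_sub_C he, hS]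

theorem finrank_map_evalAtGrid_restrictSupport_Iic (he : Injective e) {n : ℕ} {b : Fin n →₀ ℕ}
    (hb : ∀ i, b i < Fintype.card α) :
    Module.finrank R ((restrictSupport R (Set.Iic b)).map (evalAtGrid e)) =
      b.prod fun _ k => k + 1 := by
  have hinj : Injective ((evalAtGrid e).domRestrict (restrictSupport R (Set.Iic b))) := by
    rw [← LinearMap.ker_eq_bot, LinearMap.ker_eq_bot']
    rintro ⟨f, hf⟩ (hzero : evalAtGrid e f = 0)
    by_contra hne
    have hcount : ∏ i, (Fintype.card α - degreeOf i f) ≤ hammingNorm (evalAtGrid e f) :=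
      prod_card_sub_degreeOf_le_hammingNorm_evalAtGrid he fun h => hne (Subtype.ext h)
    rw [hzero, hammingNorm_zero, Nat.le_zero, prod_eq_zero_iff] at hcount
    obtain ⟨i, -, hi⟩ := hcount
    have hfi := mem_restrictSupport_Iic_iff.1 hf i
    have hbi := hb i
    omega
  rw [← LinearMap.range_domRestrict, LinearMap.finrank_range_of_inj hinj,
    finrank_restrictSupport_Iic]

end Counting

theorem box_toric_code_parameters_general {F : Type*} [Field F] [Fintype F] [DecidableEq F]
    {r : ℕ} (b : Fin r → ℕ) (hb : ∀ i, b i ≤ Fintype.card F - 2)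
    (C : Set ((Fin r → Fˣ) → F))
    (hC : C = { c | ∃ f : MvPolynomial (Fin r) F,
        (∀ i, MvPolynomial.degreeOf i f ≤ b i) ∧
        c = fun t => MvPolynomial.eval (fun i => (t i : F)) f }) :
    Fintype.card (Fin r → Fˣ) = (Fintype.card F - 1) ^ r ∧
    Module.finrank F (Submodule.span F C) = ∏ i, (b i + 1) ∧
    (∀ c ∈ C, c ≠ 0 → ∏ i, (Fintype.card F - 1 - b i) ≤ hammingNorm c) ∧
    (∃ c ∈ C, c ≠ 0 ∧ hammingNorm c = ∏ i, (Fintype.card F - 1 - b i)) := by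
  have hb_lt : ∀ i, b i < Fintype.card Fˣ := fun i => by
    have hq : 2 ≤ Fintype.card F := Fintype.one_lt_card
    have hbi := hb i
    rw [Fintype.card_units]
    omega
  have hbox : C = (restrictSupport F (Set.Iic (Finsupp.equivFunOnFinite.symm b))).map
      (evalAtGrid ((↑) : Fˣ → F)) := by
    ext c
    simp [hC, mem_restrictSupport_Iic_iff, eq_comm, funext_iff]
  rw [← Fintype.card_units]
  refine ⟨by simp, ?_, ?_, ?_⟩
  · rw [hbox, Submodule.span_eq, finrank_map_evalAtGrid_restrictSupport_Iic Units.val_injective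
      hb_lt, Finsupp.prod_fintype _ _ fun _ => rfl]
    rfl
  · rw [hC]
    rintro c ⟨f, hf, rfl⟩ hc
    calc ∏ i, (Fintype.card Fˣ - b i)
        ≤ ∏ i, (Fintype.card Fˣ - degreeOf i f) :=
          prod_le_prod' fun i _ => Nat.sub_le_sub_left (hf i) _
      _ ≤ hammingNorm (evalAtGrid ((↑) : Fˣ → F) f) :=
          prod_card_sub_degreeOf_le_hammingNorm_evalAtGrid Units.val_injective
            fun h => hc (funext fun t => by simp [h])
  · obtain ⟨f, hf, hweight⟩ :=
      exists_degreeOf_le_hammingNorm_evalAtGrid_eq Units.val_injective fun i => (hb_lt i).le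
    refine ⟨evalAtGrid ((↑) : Fˣ → F) f, hC ▸ ⟨f, hf, rfl⟩, ?_, hweight⟩
    rw [← hammingNorm_pos_iff, hweight]
    exact prod_pos fun i _ => Nat.sub_pos_of_lt (hb_lt i)

/-- The toric code of the box `[0,b₁] × ⋯ × [0,b_r]` has parameters
`[(q-1)^r, ∏ (bᵢ+1), ∏ (q-1-bᵢ)]`. -/
theorem box_toric_code_parameters {F : Type*} [Field F] [Fintype F] [DecidableEq F]
    {r : ℕ} (hr : 1 ≤ r) (b : Fin r → ℕ) (hb : ∀ i, b i ≤ Fintype.card F - 2)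
    (C : Set ((Fin r → Fˣ) → F))
    (hC : C = { c | ∃ f : MvPolynomial (Fin r) F,
        (∀ i, MvPolynomial.degreeOf i f ≤ b i) ∧
        c = fun t => MvPolynomial.eval (fun i => (t i : F)) f }) :
    Fintype.card (Fin r → Fˣ) = (Fintype.card F - 1) ^ r ∧
    Module.finrank F (Submodule.span F C) = ∏ i, (b i + 1) ∧
    (∀ c ∈ C, c ≠ 0 → ∏ i, (Fintype.card F - 1 - b i) ≤ hammingNorm c) ∧
    (∃ c ∈ C, c ≠ 0 ∧ hammingNorm c = ∏ i, (Fintype.card F - 1 - b i)) :=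
  box_toric_code_parameters_general b hb C hC
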